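/- Under the SETUP, for every w ∈ S^⊥ and every w* ∈ S^⊥ with D(w*) = D*: −‖w*‖ · ‖P_{S^⊥}(x̃(w))‖ ≤ F(x̃(w)) − F* ≤ ‖w‖ · ‖P_{S^⊥}(x̃(w))‖. -/

import Mathlib

noncomputable section

open scoped BigOperators

abbrev Evec (d : ℕ) := EuclideanSpace ℝ (Fin d)
abbrev ENvec (n d : ℕ) := PiLp 2 (fun _ : Fin n => EuclideanSpace ℝ (Fin d))

/-- Real inner product on `ℝ^d`. -/
def ip {d : ℕ} (x y : Evec d) : ℝ := inner ℝ x y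

/-- Real inner product on `ℝ^{nd}`. -/
def ipN {n d : ℕ} (x y : ENvec n d) : ℝ := inner ℝ x y

/-- `g` is a subgradient of `f` at `x`. -/
def IsSubgradientAt {d : ℕ} (f : Evec d → ℝ) (g x : Evec d) : Prop :=
  ∀ y, f x + ip g (y - x) ≤ f y

/-- `f` is strongly convex on `X` with parameter `θ`. -/
def StrongConvexOnWith {d : ℕ} (X : Set (Evec d)) (θ : ℝ) (f : Evec d → ℝ) : Prop :=
  ∀ x ∈ X, ∀ y ∈ X, ∀ g, IsSubgradientAt f g x →
    θ / 2 * ‖y - x‖ ^ 2 ≤ f y - f x - ip g (y - x)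

structure Setup (n d : ℕ) : Type where
  hn : 2 ≤ n
  hd : 1 ≤ d
  X : Fin n → Set (Evec d)
  f : Fin n → Evec d → ℝ
  θ : Fin n → ℝ
  hθ : ∀ i, 0 < θ i
  hXne : ∀ i, (X i).Nonempty
  hXclosed : ∀ i, IsClosed (X i)
  hXconv : ∀ i, Convex ℝ (X i)
  hfconv : ∀ i, ConvexOn ℝ Set.univ (f i)
  hstrong : ∀ i, StrongConvexOnWith (X i) (θ i) (f i)
  hzero : (0 : Evec d) ∈ interior (⋂ i, X i)
  xt : Fin n → Evec d → Evec d
  hxt_mem : ∀ i w, xt i w ∈ X i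
  hxt_max : ∀ i w, ∀ x ∈ X i, ip w x - f i x ≤ ip w (xt i w) - f i (xt i w)
  hxt_uniq : ∀ i w x, x ∈ X i →
    ip w x - f i x = ip w (xt i w) - f i (xt i w) → x = xt i w
  xstar : Evec d
  hxstar_mem : xstar ∈ ⋂ i, X i
  hxstar_min : ∀ x ∈ ⋂ i, X i, (∑ i, f i xstar) ≤ ∑ i, f i x

namespace Setup

variable {n d : ℕ} (P : Setup n d)

/-- Lipschitz constants `L_i = 1/θ_i`. -/
def Lip (i : Fin n) : ℝ := 1 / P.θ i

/-- `L = max_i L_i`. -/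
def Lmax : ℝ := ⨆ i, P.Lip i

/-- The conjugate function `d_i`. -/
def dconj (i : Fin n) (w : Evec d) : ℝ := ip w (P.xt i w) - P.f i (P.xt i w)

/-- The Fenchel dual function `D`. -/
def D (w : ENvec n d) : ℝ := ∑ i, P.dconj i (w i)

/-- The map `x̃ = ∇D`. -/
def xtv (w : ENvec n d) : ENvec n d := WithLp.toLp 2 (fun i => P.xt i (w i))

/-- The primal objective `F`. -/
def Fobj (x : ENvec n d) : ℝ := ∑ i, P.f i (x i)

/-- The optimal primal value. -/
def Fstar : ℝ := ∑ i, P.f i P.xstar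

/-- The primal optimum `𝐱* = (x*, …, x*)`. -/
def xstarv : ENvec n d := WithLp.toLp 2 (fun _ => P.xstar)

end Setup

/-- The subspace `S^⊥ = {w : w_1 + ⋯ + w_n = 0}`. -/
def Sperp (n d : ℕ) : Submodule ℝ (ENvec n d) where
  carrier := {w | ∑ i, w i = 0}
  add_mem' := by
    intro a b ha hb
    simp only [Set.mem_setOf_eq] at ha hb ⊢
    calc ∑ i, (a + b) i = ∑ i, (a i + b i) := rfl
    _ = (∑ i, a i) + ∑ i, b i := Finset.sum_add_distrib
    _ = 0 := by rw [ha, hb, add_zero]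
  zero_mem' := by
    simp only [Set.mem_setOf_eq]
    calc ∑ i, (0 : ENvec n d) i = ∑ _i : Fin n, (0 : Evec d) := rfl
    _ = 0 := by simp
  smul_mem' := by
    intro c a ha
    simp only [Set.mem_setOf_eq] at ha ⊢
    calc ∑ i, (c • a) i = ∑ i, c • a i := rfl
    _ = c • ∑ i, a i := Finset.smul_sum.symm
    _ = 0 := by rw [ha, smul_zero]

/-- Orthogonal projection onto `S^⊥`. -/
def projSperp {n d : ℕ} (x : ENvec n d) : ENvec n d :=
  (Submodule.orthogonalProjectionOnto (Sperp n d) x : ENvec n d)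

namespace Setup

variable {n d : ℕ} (P : Setup n d)

/-- The optimal dual value `D* = min_{w ∈ S^⊥} D(w)`. -/
def Dstar : ℝ := sInf (P.D '' (Sperp n d : Set (ENvec n d)))

end Setup

/-- Block action of `H ⊗ I_d` on `ℝ^{nd}`. -/
def blockMul {n d : ℕ} (H : Matrix (Fin n) (Fin n) ℝ) (w : ENvec n d) : ENvec n d :=
  WithLp.toLp 2 (fun i => ∑ j, H i j • w j)

/-- A time-varying sequence of weighted undirected graphs. -/
structure GraphSeq (n : ℕ) : Type where
  adj : ℕ → Fin n → Fin n → Bool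
  adj_symm : ∀ k i j, adj k i j = adj k j i
  adj_irrefl : ∀ k i, adj k i i = false
  adj_ne : ∀ k, ∃ i j, adj k i j = true
  h : ℕ → Fin n → Fin n → ℝ
  h_symm : ∀ k i j, h k i j = h k j i
  hlow : ℝ
  hhigh : ℝ
  hlow_pos : 0 < hlow
  h_mem : ∀ k i j, adj k i j = true → h k i j ∈ Set.Icc hlow hhigh

namespace GraphSeq

variable {n : ℕ} (Gs : GraphSeq n)

/-- The weight matrix `H_{G^k}`. -/
def H (k : ℕ) : Matrix (Fin n) (Fin n) ℝ :=
  Matrix.of fun i j =>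
    if i = j then ∑ l, (if Gs.adj k i l = true then Gs.h k i l else 0)
    else if Gs.adj k i j = true then -(Gs.h k i j) else 0

end GraphSeq

/-- The Fenchel dual gradient algorithm: step sizes, iterates, and their defining relations. -/
structure Algo (n d : ℕ) (P : Setup n d) (Gs : GraphSeq n) : Type where
  δ : ℝ
  hδ_pos : 0 < δ
  hδ : ∀ k, (δ • Matrix.diagonal (fun i => (P.Lip i)⁻¹) - Gs.H k).PosSemidef
  αlo : ℝ
  αhi : ℝ
  hαlo : 0 < αlo
  hαhi : αhi < 2 / δ
  α : ℕ → ℝ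
  hα : ∀ k, α k ∈ Set.Icc αlo αhi
  w : ℕ → ENvec n d
  hw0 : w 0 ∈ Sperp n d
  hrec : ∀ k, w (k + 1) = w k - α k • blockMul (Gs.H k) (P.xtv (w k))

namespace Algo

variable {n d : ℕ} {P : Setup n d} {Gs : GraphSeq n} (A : Algo n d P Gs)

/-- Primal iterates `x^k = ∇D(w^k)`. -/
def x (k : ℕ) : ENvec n d := P.xtv (A.w k)

/-- The constant `ρ = min{α̲ − α̲²δ/2, ᾱ − ᾱ²δ/2}`. -/
def ρ : ℝ := min (A.αlo - A.αlo ^ 2 * A.δ / 2) (A.αhi - A.αhi ^ 2 * A.δ / 2)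

end Algo

/-!
The upper bound is weak duality: Fenchel–Young at `x*`, together with `∑ wᵢ = 0`, gives
`-F* ≤ D(w) = ⟪w, x̃(w)⟫ - F(x̃(w))`, and `⟪w, x̃(w)⟫ = ⟪w, P_{S^⊥} x̃(w)⟫` because `w ∈ S^⊥`.
The lower bound is Fenchel–Young for `w*` at `x̃(w)`, combined with strong duality
`D(w*) ≤ -F*`. For the latter, strong convexity gives quadratic growth of `⟪u, ·⟫ - fᵢ` around its
maximiser, hence the descent inequality `dᵢ(u + h) ≤ dᵢ(u) + ⟪h, x̃ᵢ(u)⟫ + Lᵢ‖h‖²/2`. The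
first-order condition at the minimiser `w*` of `D` on `S^⊥` then forces `x̃(w*) ⊥ S^⊥`, i.e.
`x̃(w*)` is a consensus point of `⋂ Xᵢ`, where `D(w*) = -F(x̃(w*)) ≤ -F*`.
-/

open scoped InnerProductSpace

theorem ConvexOn.exists_subgradient {E : Type*} [NormedAddCommGroup E] [InnerProductSpace ℝ E]
    [FiniteDimensional ℝ E] {f : E → ℝ} (hf : ConvexOn ℝ Set.univ f) (x : E) :
    ∃ g : E, ∀ y, f x + ⟪g, y - x⟫_ℝ ≤ f y := by
  have hcont : Continuous f := continuousOn_univ.mp (hf.continuousOn isOpen_univ)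
  -- separate `(x, f x)` from the open strict epigraph by a functional `ℓ`
  let epi : Set (E × ℝ) := {p | p.1 ∈ Set.univ ∧ f p.1 < p.2}
  have epi_open : IsOpen epi := by
    simp only [epi, Set.mem_univ, true_and]
    exact isOpen_lt (by fun_prop) continuous_snd
  obtain ⟨ℓ, hℓ⟩ := geometric_hahn_banach_point_open hf.convex_strict_epigraph epi_open
    (x := (x, f x)) fun h => lt_irrefl _ h.2
  let φ : E →L[ℝ] ℝ := ℓ.comp (ContinuousLinearMap.inl ℝ E ℝ)
  let c := ℓ (0, 1)
  have hℓ_apply : ∀ y s, ℓ (y, s) = φ y + s * c := fun y s => by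
    rw [show (y, s) = (y, (0 : ℝ)) + s • ((0 : E), (1 : ℝ)) by simp, map_add, map_smul,
      smul_eq_mul]
    rfl
  have hc : 0 < c := by
    have := hℓ (x, f x + 1) ⟨trivial, lt_add_one _⟩
    rw [hℓ_apply, hℓ_apply] at this
    linarith
  have key : ∀ y, φ x + f x * c ≤ φ y + f y * c := fun y =>
    le_of_forall_pos_lt_add fun ε hε => by
      have := hℓ (y, f y + ε / c) ⟨trivial, lt_add_of_pos_right _ (div_pos hε hc)⟩
      rw [hℓ_apply, hℓ_apply, add_mul, div_mul_cancel₀ _ hc.ne'] at this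
      linarith
  refine ⟨(InnerProductSpace.toDual ℝ E).symm (-(c⁻¹ • φ)), fun y => ?_⟩
  rw [InnerProductSpace.toDual_symm_apply, neg_apply, smul_apply, smul_eq_mul, map_sub]
  have : c⁻¹ * (φ x - φ y) ≤ f y - f x := by
    rw [inv_mul_le_iff₀ hc]
    linarith [key y]
  linarith

lemma le_of_forall_mem_Ioo_le_add_mul {a b c : ℝ} (h : ∀ t ∈ Set.Ioo (0 : ℝ) 1, a ≤ b + t * c) :
    a ≤ b := by
  have hlim : Filter.Tendsto (fun t => b + t * c) (nhdsWithin 0 (Set.Ioi 0)) (nhds b) := by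
    have : Continuous fun t : ℝ => b + t * c := by fun_prop
    simpa using (this.tendsto 0).mono_left nhdsWithin_le_nhds
  exact ge_of_tendsto hlim (Filter.mem_of_superset (Ioo_mem_nhdsGT one_pos) h)

section StrongConvexity

variable {d : ℕ} {X : Set (Evec d)} {θ : ℝ} {f : Evec d → ℝ}

theorem StrongConvexOnWith.apply_segment_add_le (hs : StrongConvexOnWith X θ f)
    (hf : ConvexOn ℝ Set.univ f) (hX : Convex ℝ X) {a b : Evec d} (ha : a ∈ X) (hb : b ∈ X) {t : ℝ} (ht₀ : 0 ≤ t)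
    (ht₁ : t ≤ 1) :
    f ((1 - t) • a + t • b) + θ / 2 * (t * (1 - t)) * ‖b - a‖ ^ 2 ≤ (1 - t) * f a + t * f b := by
  set m := (1 - t) • a + t • b
  have hm : m ∈ X := hX ha hb (by linarith) ht₀ (by ring)
  obtain ⟨g, hg⟩ := hf.exists_subgradient m
  have hga := hs m hm a ha g hg
  have hgb := hs m hm b hb g hg
  have ham : a - m = (-t) • (b - a) := by module
  have hbm : b - m = (1 - t) • (b - a) := by module
  simp only [ip, ham, hbm, inner_smul_right, norm_smul, Real.norm_eq_abs, abs_neg,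
    abs_of_nonneg ht₀, abs_of_nonneg (sub_nonneg.2 ht₁)] at hga hgb
  nlinarith [mul_le_mul_of_nonneg_left hga (sub_nonneg.2 ht₁), mul_le_mul_of_nonneg_left hgb ht₀]

theorem StrongConvexOnWith.sq_le_of_isMaxOn (hs : StrongConvexOnWith X θ f)
    (hf : ConvexOn ℝ Set.univ f) (hX : Convex ℝ X) {u a b : Evec d} (ha : a ∈ X)
    (hmax : IsMaxOn (fun x => ⟪u, x⟫_ℝ - f x) X a) (hb : b ∈ X) :
    θ / 2 * ‖b - a‖ ^ 2 ≤ f b - f a - ⟪u, b - a⟫_ℝ := by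
  refine le_of_forall_mem_Ioo_le_add_mul (c := θ / 2 * ‖b - a‖ ^ 2) fun t ⟨ht₀, ht₁⟩ => ?_
  have hcomb := hs.apply_segment_add_le hf hX ha hb ht₀.le ht₁.le
  have hm := isMaxOn_iff.1 hmax ((1 - t) • a + t • b) (hX ha hb (by linarith) ht₀.le (by ring))
  have hinner : ⟪u, (1 - t) • a + t • b⟫_ℝ = ⟪u, a⟫_ℝ + t * ⟪u, b - a⟫_ℝ := by
    rw [show (1 - t) • a + t • b = a + t • (b - a) by module, inner_add_right,
      real_inner_smul_right]
  rw [hinner] at hm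
  nlinarith

end StrongConvexity

section Consensus

variable {n d : ℕ}

theorem const_mem_orthogonal_Sperp (z : Evec d) :
    (WithLp.toLp 2 (fun _ : Fin n => z) : ENvec n d) ∈ (Sperp n d)ᗮ := by
  refine (Submodule.mem_orthogonal _ _).2 fun u (hu : ∑ i, u i = 0) => ?_
  rw [PiLp.inner_apply, ← sum_inner, hu, inner_zero_left]

theorem eq_of_mem_orthogonal_Sperp {x : ENvec n d} (hx : x ∈ (Sperp n d)ᗮ) (i j : Fin n) :
    x i = x j := by
  classical
  let z := x i - x j
  let v : ENvec n d := WithLp.toLp 2 (Pi.single i z - Pi.single j z)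
  have hv : v ∈ Sperp n d := by
    show ∑ k, v k = 0
    simp [v, Finset.sum_sub_distrib]
  have h := (Submodule.mem_orthogonal _ _).1 hx v hv
  rw [PiLp.inner_apply] at h
  simp only [v, Pi.sub_apply, inner_sub_left, Finset.sum_sub_distrib, Pi.single_apply] at h
  simp only [fun k => apply_ite (fun y : Evec d => ⟪y, x k⟫_ℝ), inner_zero_left,
    Finset.sum_ite_eq', Finset.mem_univ, if_true] at h
  rw [← inner_sub_right] at h
  exact sub_eq_zero.1 (inner_self_eq_zero.1 h)

end Consensus

theorem inner_projSperp_eq {n d : ℕ} {w : ENvec n d} (hw : w ∈ Sperp n d) (x : ENvec n d) :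
    ⟪w, projSperp x⟫_ℝ = ⟪w, x⟫_ℝ :=
  Submodule.inner_orthogonalProjectionOnto_eq_of_mem_left ⟨w, hw⟩ x

namespace Setup

variable {n d : ℕ} (P : Setup n d)

theorem xtv_mem (w : ENvec n d) (i : Fin n) : P.xtv w i ∈ P.X i := P.hxt_mem i (w i)

theorem dconj_add_le (i : Fin n) (u h : Evec d) :
    P.dconj i (u + h) ≤ P.dconj i u + ⟪h, P.xt i u⟫_ℝ + P.Lip i / 2 * ‖h‖ ^ 2 := by
  have hgrowth := (P.hstrong i).sq_le_of_isMaxOn (P.hfconv i) (P.hXconv i) (P.hxt_mem i u)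
    (isMaxOn_iff.2 (P.hxt_max i u)) (P.hxt_mem i (u + h))
  set a := P.xt i u
  set b := P.xt i (u + h)
  have hθ := P.hθ i
  have hL : P.Lip i = 1 / P.θ i := rfl
  have young : ⟪h, b - a⟫_ℝ ≤ P.θ i / 2 * ‖b - a‖ ^ 2 + P.Lip i / 2 * ‖h‖ ^ 2 := by
    rw [hL]
    have := real_inner_le_norm h (b - a)
    have hsq : 0 ≤ (P.θ i * ‖b - a‖ - ‖h‖) ^ 2 / P.θ i := by positivity
    have hexp : (P.θ i * ‖b - a‖ - ‖h‖) ^ 2 / P.θ i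
        = P.θ i * ‖b - a‖ ^ 2 - 2 * (‖h‖ * ‖b - a‖) + 1 / P.θ i * ‖h‖ ^ 2 := by
      field_simp
      ring
    linarith
  simp only [dconj, ip, inner_add_left, inner_sub_right] at hgrowth young ⊢
  linarith

theorem D_add_smul_le (w v : ENvec n d) (t : ℝ) :
    P.D (w + t • v) ≤ P.D w + t * ⟪v, P.xtv w⟫_ℝ + t ^ 2 * ∑ i, P.Lip i / 2 * ‖v i‖ ^ 2 := by
  have h := Finset.sum_le_sum fun i (_ : i ∈ Finset.univ) => P.dconj_add_le i (w i) (t • v i)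
  simp only [Finset.sum_add_distrib, real_inner_smul_left, norm_smul, Real.norm_eq_abs, mul_pow,
    sq_abs, mul_left_comm _ (t ^ 2), ← Finset.mul_sum] at h
  rw [PiLp.inner_apply]
  exact h

theorem D_eq_inner_sub_Fobj (w : ENvec n d) : P.D w = ⟪w, P.xtv w⟫_ℝ - P.Fobj (P.xtv w) := by
  rw [PiLp.inner_apply, Fobj, D, ← Finset.sum_sub_distrib]
  rfl

theorem inner_sub_Fobj_le_D {x : ENvec n d} (hx : ∀ i, x i ∈ P.X i) (w : ENvec n d) :
    ⟪w, x⟫_ℝ - P.Fobj x ≤ P.D w := by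
  rw [PiLp.inner_apply, Fobj, D, ← Finset.sum_sub_distrib]
  exact Finset.sum_le_sum fun i _ => P.hxt_max i (w i) (x i) (hx i)

theorem neg_Fstar_le_D {w : ENvec n d} (hw : w ∈ Sperp n d) : -P.Fstar ≤ P.D w := by
  have h := P.inner_sub_Fobj_le_D (x := P.xstarv) (Set.mem_iInter.1 P.hxstar_mem) w
  rwa [xstarv, (Submodule.mem_orthogonal _ _).1 (const_mem_orthogonal_Sperp P.xstar) w hw,
    zero_sub] at h

theorem isMinOn_D_of_D_eq_Dstar {w : ENvec n d} (h : P.D w = P.Dstar) :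
    IsMinOn P.D (Sperp n d) w :=
  isMinOn_iff.2 fun u hu => h ▸ csInf_le ⟨-P.Fstar, by
    rintro _ ⟨v, hv, rfl⟩
    exact P.neg_Fstar_le_D hv⟩ (Set.mem_image_of_mem _ hu)

theorem xtv_mem_orthogonal_of_isMinOn {w : ENvec n d} (hw : w ∈ Sperp n d)
    (hmin : IsMinOn P.D (Sperp n d) w) : P.xtv w ∈ (Sperp n d)ᗮ := by
  have hnonneg : ∀ v ∈ Sperp n d, 0 ≤ ⟪v, P.xtv w⟫_ℝ := fun v hv =>
    le_of_forall_mem_Ioo_le_add_mul (c := ∑ i, P.Lip i / 2 * ‖v i‖ ^ 2) fun t ⟨ht₀, _⟩ => by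
      have hle := isMinOn_iff.1 hmin (w + t • v) (add_mem hw (Submodule.smul_mem _ t hv))
      have hdescent := P.D_add_smul_le w v t
      refine nonneg_of_mul_nonneg_right (a := t) ?_ ht₀
      nlinarith
  refine (Submodule.mem_orthogonal _ _).2 fun v hv => le_antisymm ?_ (hnonneg v hv)
  simpa [inner_neg_left] using hnonneg (-v) (neg_mem hv)

theorem D_le_neg_Fstar_of_isMinOn {w : ENvec n d} (hw : w ∈ Sperp n d)
    (hmin : IsMinOn P.D (Sperp n d) w) : P.D w ≤ -P.Fstar := by
  have hperp := P.xtv_mem_orthogonal_of_isMinOn hw hmin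
  let i₀ : Fin n := ⟨0, by have := P.hn; omega⟩
  have hconst : ∀ i, P.xtv w i = P.xtv w i₀ := fun i => eq_of_mem_orthogonal_Sperp hperp i i₀
  have hmem : P.xtv w i₀ ∈ ⋂ i, P.X i := Set.mem_iInter.2 fun i => hconst i ▸ P.xtv_mem w i
  have hF : P.Fstar ≤ P.Fobj (P.xtv w) := by
    simpa only [Fstar, Fobj, hconst] using P.hxstar_min _ hmem
  rw [P.D_eq_inner_sub_Fobj, (Submodule.mem_orthogonal _ _).1 hperp w hw]
  linarith

end Setup

theorem stmt16 {n d : ℕ} (P : Setup n d) :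
    ∀ w ∈ Sperp n d, ∀ wstar ∈ Sperp n d, P.D wstar = P.Dstar →
      -(‖wstar‖ * ‖projSperp (P.xtv w)‖) ≤ P.Fobj (P.xtv w) - P.Fstar ∧
      P.Fobj (P.xtv w) - P.Fstar ≤ ‖w‖ * ‖projSperp (P.xtv w)‖ := by
  intro w hw wstar hwstar hD
  have hstrong := P.D_le_neg_Fstar_of_isMinOn hwstar (P.isMinOn_D_of_D_eq_Dstar hD)
  have hweak := P.neg_Fstar_le_D hw
  have hw_eq := P.D_eq_inner_sub_Fobj w
  have hwstar_le := P.inner_sub_Fobj_le_D (P.xtv_mem w) wstar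
  rw [← inner_projSperp_eq hw] at hw_eq
  rw [← inner_projSperp_eq hwstar] at hwstar_le
  constructor
  · linarith [neg_le_of_abs_le (abs_real_inner_le_norm wstar (projSperp (P.xtv w)))]
  · linarith [real_inner_le_norm w (projSperp (P.xtv w))]
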